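/- arXiv:1711.01785 — 2 statements merged into one kernel-verified Lean document; each statement's English description precedes it below -/
import Mathlib

section
/- Let k be a field, A a finite-dimensional k-algebra, and U ⊆ T two torsion classes in mod A. Then every finitely generated A-module X with X ∈ T and Hom_A(U', X) = 0 for all U' ∈ U admits a finite chain of submodules 0 = X₀ ⊆ X₁ ⊆ ⋯ ⊆ X_n = X such that each subquotient X_i/X_{i−1} is a brick lying in T and satisfying Hom_A(U', X_i/X_{i−1}) = 0 for all U' ∈ U. -/
universe u

/-- A torsion class in the category `mod A` of finitely generated `A`-modules:
a class of finitely generated modules, containing the zero modules, closed under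
isomorphism, images of surjective homomorphisms (factor modules) and extensions. -/
def IsTorsionClass (A : Type u) [Ring A] (T : Set (ModuleCat.{u} A)) : Prop :=
  (∀ M ∈ T, Module.Finite A M) ∧
  (∀ M : ModuleCat.{u} A, Subsingleton M → M ∈ T) ∧
  (∀ M N : ModuleCat.{u} A, M ∈ T → Nonempty (M ≃ₗ[A] N) → N ∈ T) ∧
  (∀ (M N : ModuleCat.{u} A) (f : M →ₗ[A] N), Function.Surjective f → M ∈ T → N ∈ T) ∧
  (∀ (M : ModuleCat.{u} A) (S : Submodule A M),
     ModuleCat.of A S ∈ T → ModuleCat.of A (M ⧸ S) ∈ T → M ∈ T)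

/-- The smallest torsion class containing a class `C` of modules: the intersection of
all torsion classes containing `C`. -/
def torsGen (A : Type u) [Ring A] (C : Set (ModuleCat.{u} A)) : Set (ModuleCat.{u} A) :=
  ⋂₀ {T | IsTorsionClass A T ∧ C ⊆ T}

/-- A brick: a nonzero finitely generated module all of whose nonzero endomorphisms are
invertible. -/
def IsBrick (A : Type u) [Ring A] (S : ModuleCat.{u} A) : Prop :=
  Nontrivial S ∧ Module.Finite A S ∧ ∀ f : S →ₗ[A] S, f ≠ 0 → Function.Bijective f

/-!
Given `M ∈ T ∩ U^⊥`, take `W ⊊ M` maximal with `W ∈ T` and `M ⧸ W ∈ U^⊥`. Then `B = M ⧸ W`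
has no nontrivial short exact sequence inside `T ∩ U^⊥`, and this makes `End B` free of zero
divisors: if `f ∘ h = 0` with `h ≠ 0`, the preimage in `B` of the largest `U`-submodule of
`B ⧸ range h` is such a subobject, containing `range h ≠ 0`; hence it is `B`, so `B ⧸ range h ∈ U`
and `f`, which factors through it, vanishes. By Fitting's lemma a module of finite length whose
endomorphism ring has no zero divisors is a brick. As `W ∈ T ∩ U^⊥` again, descending induction
on submodules yields the filtration.
-/

section TorsionPerp

open Submodule

variable {A : Type u} [Ring A] {T U : Set (ModuleCat.{u} A)}
  {M N : Type u} [AddCommGroup M] [Module A M] [AddCommGroup N] [Module A N]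

namespace IsTorsionClass

theorem of_subsingleton (hT : IsTorsionClass A T) [Subsingleton M] : ModuleCat.of A M ∈ T :=
  hT.2.1 _ ‹_›

theorem of_linearEquiv (hT : IsTorsionClass A T) (e : M ≃ₗ[A] N) (hM : ModuleCat.of A M ∈ T) :
    ModuleCat.of A N ∈ T :=
  hT.2.2.1 _ _ hM ⟨e⟩

theorem of_surjective (hT : IsTorsionClass A T) (f : M →ₗ[A] N) (hf : Function.Surjective f)
    (hM : ModuleCat.of A M ∈ T) : ModuleCat.of A N ∈ T :=
  hT.2.2.2.1 (ModuleCat.of A M) (ModuleCat.of A N) f hf hM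

theorem range_mem (hT : IsTorsionClass A T) (f : M →ₗ[A] N) (hM : ModuleCat.of A M ∈ T) :
    ModuleCat.of A (LinearMap.range f) ∈ T :=
  hT.of_surjective f.rangeRestrict f.surjective_rangeRestrict hM

theorem quotient_mem (hT : IsTorsionClass A T) (p : Submodule A M) (hM : ModuleCat.of A M ∈ T) :
    ModuleCat.of A (M ⧸ p) ∈ T :=
  hT.of_surjective p.mkQ p.mkQ_surjective hM

theorem comap_mkQ_mem (hT : IsTorsionClass A T) {W : Submodule A M} (hW : ModuleCat.of A W ∈ T)
    {q : Submodule A (M ⧸ W)} (hq : ModuleCat.of A q ∈ T) :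
    ModuleCat.of A (q.comap W.mkQ) ∈ T := by
  set V := q.comap W.mkQ
  have hWV : W ≤ V := le_comap_mkQ W q
  let φ : V →ₗ[A] q := W.mkQ.restrict fun _ hx => hx
  have hφ : Function.Surjective φ := by
    rintro ⟨y, hy⟩
    obtain ⟨x, rfl⟩ := W.mkQ_surjective y
    exact ⟨⟨x, hy⟩, rfl⟩
  have hker : LinearMap.ker φ = W.comap V.subtype := by
    ext x
    simp [φ, LinearMap.restrict_apply]
  refine hT.2.2.2.2 (ModuleCat.of A V) (W.comap V.subtype)
    (hT.of_linearEquiv (comapSubtypeEquivOfLe hWV).symm hW) ?_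
  exact hT.of_linearEquiv ((quotEquivOfEq _ _ hker.symm).trans
    (φ.quotKerEquivOfSurjective hφ)).symm hq

end IsTorsionClass

/-- `M ∈ U^⊥`. -/
def MemPerp (U : Set (ModuleCat.{u} A)) (M : Type u) [AddCommGroup M] [Module A M] : Prop :=
  ∀ U' ∈ U, ∀ f : U' →ₗ[A] M, f = 0

namespace MemPerp

theorem of_injective (f : M →ₗ[A] N) (hf : Function.Injective f) (hN : MemPerp U N) :
    MemPerp U M := by
  intro U' hU' g
  ext x
  apply hf
  simpa using LinearMap.congr_fun (hN U' hU' (f ∘ₗ g)) x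

theorem quotient_comap_mkQ {W : Submodule A M} {q : Submodule A (M ⧸ W)}
    (hq : MemPerp U ((M ⧸ W) ⧸ q)) : MemPerp U (M ⧸ q.comap W.mkQ) :=
  have hker : q.comap W.mkQ = LinearMap.ker (q.mkQ ∘ₗ W.mkQ) := by
    rw [LinearMap.ker_comp, ker_mkQ]
  of_injective (liftQ _ _ hker.le) (LinearMap.ker_eq_bot.mp (ker_liftQ_eq_bot' _ _ hker)) hq

end MemPerp

theorem memPerp_of_forall_submodule (hU : IsTorsionClass A U)
    (h : ∀ p : Submodule A M, ModuleCat.of A p ∈ U → p = ⊥) : MemPerp U M := by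
  intro U' hU' f
  exact LinearMap.range_eq_bot.mp (h _ (hU.range_mem f hU'))

/-- Witnessed by a maximal submodule lying in `U`. -/
theorem exists_mem_memPerp_quotient (hU : IsTorsionClass A U) [IsNoetherian A M] :
    ∃ t : Submodule A M, ModuleCat.of A t ∈ U ∧ MemPerp U (M ⧸ t) := by
  obtain ⟨t, htU, htmax⟩ := set_has_maximal_iff_noetherian.mpr ‹_›
    {p : Submodule A M | ModuleCat.of A p ∈ U} ⟨⊥, hU.of_subsingleton⟩
  refine ⟨t, htU, memPerp_of_forall_submodule hU fun p hp => ?_⟩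
  have hle : t ≤ p.comap t.mkQ := le_comap_mkQ t p
  have heq : p.comap t.mkQ = (⊥ : Submodule A (M ⧸ t)).comap t.mkQ := by
    rw [comap_bot, ker_mkQ]
    exact (hle.lt_or_eq.resolve_left (htmax _ (hU.comap_mkQ_mem htU hp))).symm
  exact comap_injective_of_surjective t.mkQ_surjective heq

/-- `B` has no nontrivial subobject in the exact category `T ∩ U^⊥`. -/
def IsSimpleInTorsPerp (T U : Set (ModuleCat.{u} A)) (B : Type u) [AddCommGroup B] [Module A B] :
    Prop :=
  ∀ q : Submodule A B, ModuleCat.of A q ∈ T → MemPerp U (B ⧸ q) → q = ⊥ ∨ q = ⊤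

theorem exists_isSimpleInTorsPerp_quotient (hT : IsTorsionClass A T) [IsNoetherian A M]
    [Nontrivial M] (hM : MemPerp U M) :
    ∃ W : Submodule A M, W ≠ ⊤ ∧ ModuleCat.of A W ∈ T ∧ MemPerp U (M ⧸ W) ∧
      IsSimpleInTorsPerp T U (M ⧸ W) := by
  have hbot : MemPerp U (M ⧸ (⊥ : Submodule A M)) :=
    MemPerp.of_injective _ (quotEquivOfEqBot ⊥ rfl).injective hM
  obtain ⟨W, ⟨hWtop, hWT, hWU⟩, hWmax⟩ := set_has_maximal_iff_noetherian.mpr ‹_›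
    {W : Submodule A M | W ≠ ⊤ ∧ ModuleCat.of A W ∈ T ∧ MemPerp U (M ⧸ W)}
    ⟨⊥, bot_ne_top, hT.of_subsingleton, hbot⟩
  refine ⟨W, hWtop, hWT, hWU, fun q hqT hqU => ?_⟩
  have hVT := hT.comap_mkQ_mem hWT hqT
  have hVU := MemPerp.quotient_comap_mkQ hqU
  by_cases hVtop : q.comap W.mkQ = ⊤
  · right
    exact comap_injective_of_surjective W.mkQ_surjective (by rw [hVtop, comap_top])
  · left
    have hWV : W = q.comap W.mkQ :=
      (le_comap_mkQ W q).lt_or_eq.resolve_left (hWmax _ ⟨hVtop, hVT, hVU⟩)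
    exact comap_injective_of_surjective W.mkQ_surjective (by rw [← hWV, comap_bot, ker_mkQ])

theorem IsSimpleInTorsPerp.noZeroDivisors {B : Type u} [AddCommGroup B] [Module A B]
    [IsNoetherian A B] (hT : IsTorsionClass A T) (hU : IsTorsionClass A U) (hUT : U ⊆ T)
    (hBT : ModuleCat.of A B ∈ T) (hBU : MemPerp U B) (hB : IsSimpleInTorsPerp T U B) :
    NoZeroDivisors (Module.End A B) := by
  refine ⟨fun {f h} hfh => ?_⟩
  set I := LinearMap.range h
  obtain ⟨t, htU, htperp⟩ := exists_mem_memPerp_quotient hU (M := B ⧸ I)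
  rcases hB (t.comap I.mkQ) (hT.comap_mkQ_mem (hT.range_mem h hBT) (hUT htU))
    (MemPerp.quotient_comap_mkQ htperp) with hbot | htop
  · right
    exact LinearMap.range_eq_bot.mp (le_bot_iff.mp (hbot ▸ le_comap_mkQ I t))
  · left
    let f' := I.liftQ f (LinearMap.range_le_ker_iff.mpr hfh)
    have hf't : f' ∘ₗ t.subtype = 0 := hBU _ htU _
    ext x
    have hx : I.mkQ x ∈ t := (htop ▸ mem_top : x ∈ t.comap I.mkQ)
    exact LinearMap.congr_fun hf't ⟨_, hx⟩

theorem Module.End.bijective_of_ne_zero [IsArtinian A M] [IsNoetherian A M]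
    [NoZeroDivisors (Module.End A M)] {g : Module.End A M} (hg : g ≠ 0) :
    Function.Bijective g := by
  obtain ⟨n, hcompl, hn⟩ :=
    (g.eventually_isCompl_ker_pow_range_pow.and (Filter.eventually_gt_atTop 0)).exists
  have hproj : (LinearMap.ker (g ^ n)).projection _ hcompl * g ^ n = 0 := by
    ext x
    exact projection_apply_of_mem_right hcompl (LinearMap.mem_range_self _ x)
  have hker : LinearMap.ker (g ^ n) = ⊥ := by
    rw [← range_projection hcompl, (mul_eq_zero.mp hproj).resolve_right (pow_ne_zero n hg),
      LinearMap.range_zero]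
  refine IsArtinian.bijective_of_injective_endomorphism g (LinearMap.ker_eq_bot.mp ?_)
  refine le_bot_iff.mp (hker ▸ ?_)
  rw [← Nat.sub_add_cancel hn, pow_succ, Module.End.mul_eq_comp]
  exact LinearMap.ker_le_ker_comp _ _

def IsBrickInTorsPerp (T U : Set (ModuleCat.{u} A)) (B : Type u) [AddCommGroup B] [Module A B] :
    Prop :=
  IsBrick A (ModuleCat.of A B) ∧ ModuleCat.of A B ∈ T ∧ MemPerp U B

theorem exists_brick_quotient (hT : IsTorsionClass A T) (hU : IsTorsionClass A U) (hUT : U ⊆ T)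
    [IsArtinian A M] [IsNoetherian A M] [Nontrivial M] (hMT : ModuleCat.of A M ∈ T)
    (hMU : MemPerp U M) :
    ∃ W : Submodule A M, W ≠ ⊤ ∧ ModuleCat.of A W ∈ T ∧ IsBrickInTorsPerp T U (M ⧸ W) := by
  obtain ⟨W, hWtop, hWT, hWU, hW⟩ := exists_isSimpleInTorsPerp_quotient hT hMU
  have hBT := hT.quotient_mem W hMT
  have := hW.noZeroDivisors hT hU hUT hBT hWU
  exact ⟨W, hWtop, hWT, ⟨Quotient.nontrivial_iff.mpr hWtop, hT.1 _ hBT,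
    fun _ => Module.End.bijective_of_ne_zero⟩, hBT, hWU⟩

theorem exists_lt_brick_subquotient (hT : IsTorsionClass A T) (hU : IsTorsionClass A U)
    (hUT : U ⊆ T) [IsArtinian A M] [IsNoetherian A M] (Z : Submodule A M) (hZ : Z ≠ ⊥)
    (hZT : ModuleCat.of A Z ∈ T) (hZU : MemPerp U Z) :
    ∃ Z' < Z, (ModuleCat.of A Z' ∈ T ∧ MemPerp U Z') ∧
      IsBrickInTorsPerp T U (Z ⧸ Z'.comap Z.subtype) := by
  have : Nontrivial Z := nontrivial_iff_ne_bot.mpr hZ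
  obtain ⟨W, hWtop, hWT, hbrick⟩ := exists_brick_quotient hT hU hUT hZT hZU
  have hW : (W.map Z.subtype).comap Z.subtype = W := comap_map_eq_of_injective Z.injective_subtype W
  refine ⟨W.map Z.subtype, (map_subtype_le Z W).lt_of_ne fun h => hWtop ?_, ⟨?_, ?_⟩, by rwa [hW]⟩
  · rw [← hW, h, comap_subtype_self]
  · exact hT.of_linearEquiv (W.equivMapOfInjective _ Z.injective_subtype) hWT
  · exact hZU.of_injective (inclusion (map_subtype_le Z W)) (inclusion_injective _)

end TorsionPerp

theorem exists_fin_chain_of_exists_lt {α : Type*} [PartialOrder α] [OrderBot α] [WellFoundedLT α]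
    (S : α → Prop) (R : α → α → Prop) (step : ∀ z, z ≠ ⊥ → S z → ∃ z' < z, S z' ∧ R z' z)
    (z : α) (hz : S z) :
    ∃ (n : ℕ) (c : Fin (n + 1) → α), Monotone c ∧ c 0 = ⊥ ∧ c (Fin.last n) = z ∧
      ∀ i : Fin n, R (c i.castSucc) (c i.succ) := by
  induction z using WellFoundedLT.induction with
  | _ z ih =>
  rcases eq_or_ne z ⊥ with rfl | hz0
  · exact ⟨0, fun _ => ⊥, monotone_const, rfl, rfl, Fin.elim0⟩
  obtain ⟨z', hlt, hz', hR⟩ := step z hz0 hz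
  obtain ⟨n, c, hc, hc0, hcn, hcR⟩ := ih z' hlt hz'
  let c' : Fin (n + 2) → α := Fin.snoc c z
  have hsteps : ∀ i : Fin (n + 1), c' i.castSucc ≤ c' i.succ ∧ R (c' i.castSucc) (c' i.succ) := by
    refine Fin.lastCases ?_ fun j => ?_
    · simp only [c', Fin.succ_last, Fin.snoc_last, Fin.snoc_castSucc, hcn]
      exact ⟨hlt.le, hR⟩
    · simp only [c', Fin.succ_castSucc, Fin.snoc_castSucc]
      exact ⟨hc (Fin.castSucc_le_succ j), hcR j⟩
  exact ⟨n + 1, c', Fin.monotone_iff_le_succ.mpr fun i => (hsteps i).1,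
    (Fin.snoc_castSucc (i := 0) ..).trans hc0, Fin.snoc_last _ _, fun i => (hsteps i).2⟩

/-- For torsion classes `U ⊆ T`, every module `X ∈ T` with `Hom_A(U', X) = 0` for all
`U' ∈ U` admits a finite chain of submodules `0 = X₀ ⊆ ⋯ ⊆ Xₙ = X` whose subquotients
are bricks lying in `T` and receiving no nonzero homomorphism from `U`. -/
theorem tors_inter_perp_filtered_by_bricks (k A : Type u) [Field k] [Ring A] [Algebra k A]
    [FiniteDimensional k A]
    (T U : Set (ModuleCat.{u} A)) (hT : IsTorsionClass A T) (hU : IsTorsionClass A U)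
    (hUT : U ⊆ T) :
    ∀ X : ModuleCat.{u} A, X ∈ T → (∀ U' ∈ U, ∀ f : U' →ₗ[A] X, f = 0) →
      ∃ (n : ℕ) (c : Fin (n + 1) → Submodule A X),
        Monotone c ∧ c 0 = ⊥ ∧ c (Fin.last n) = ⊤ ∧
        ∀ i : Fin n,
          IsBrick A (ModuleCat.of A
            (c i.succ ⧸ Submodule.comap (c i.succ).subtype (c i.castSucc))) ∧
          ModuleCat.of A
            (c i.succ ⧸ Submodule.comap (c i.succ).subtype (c i.castSucc)) ∈ T ∧
          ∀ U' ∈ U,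
            ∀ f : U' →ₗ[A]
              (c i.succ ⧸ Submodule.comap (c i.succ).subtype (c i.castSucc)), f = 0 := by
  intro X hXT hXU
  have : IsArtinianRing A := .of_finite k A
  have : IsNoetherianRing A := isNoetherian_of_tower k inferInstance
  have : Module.Finite A X := hT.1 X hXT
  have htop : ModuleCat.of A (⊤ : Submodule A X) ∈ T ∧ MemPerp U (⊤ : Submodule A X) :=
    ⟨hT.of_linearEquiv Submodule.topEquiv.symm hXT,
      MemPerp.of_injective _ Submodule.topEquiv.injective hXU⟩
  exact exists_fin_chain_of_exists_lt
    (fun Z : Submodule A X => ModuleCat.of A Z ∈ T ∧ MemPerp U Z)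
    (fun Z' Z => IsBrickInTorsPerp T U (Z ⧸ Z'.comap Z.subtype))
    (fun Z hZ hZTU => exists_lt_brick_subquotient hT hU hUT Z hZ hZTU.1 hZTU.2) ⊤ htop
end

section
/- Let k be a field, A a finite-dimensional k-algebra, I a two-sided ideal of A, and identify mod(A/I) with the class of finitely generated A-modules X satisfying I·X = 0. Then the map T ↦ T ∩ mod(A/I): (i) sends every torsion class of mod A to a torsion class of mod(A/I); (ii) is surjective onto the set of torsion classes of mod(A/I); (iii) preserves arbitrary meets: for any family 𝒮 of torsion classes of mod A, (⋂𝒮) ∩ mod(A/I) = ⋂_{T ∈ 𝒮} (T ∩ mod(A/I)); and (iv) preserves arbitrary joins: the smallest torsion class of mod A containing all members of 𝒮, intersected with mod(A/I), equals the smallest torsion class of mod(A/I) containing all the classes T ∩ mod(A/I) for T ∈ 𝒮. -/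
universe u

/-- `mod (A/I)`, identified with the class of finitely generated `A`-modules
annihilated by the two-sided ideal `I`. -/
def annMod (A : Type u) [Ring A] (I : TwoSidedIdeal A) : Set (ModuleCat.{u} A) :=
  {X : ModuleCat.{u} A | Module.Finite A X ∧ ∀ a ∈ I, ∀ x : X, a • x = 0}

/-- A torsion class in `mod (A/I)`: a class of finitely generated `A`-modules
annihilated by `I`, containing the zero modules, closed under isomorphism, images
of surjective homomorphisms, and extensions within `mod (A/I)`. -/
def IsTorsionClassMod (A : Type u) [Ring A] (I : TwoSidedIdeal A)
    (T : Set (ModuleCat.{u} A)) : Prop :=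
  (∀ M ∈ T, M ∈ annMod A I) ∧
  (∀ M : ModuleCat.{u} A, Subsingleton M → M ∈ T) ∧
  (∀ M N : ModuleCat.{u} A, M ∈ T → Nonempty (M ≃ₗ[A] N) → N ∈ T) ∧
  (∀ (M N : ModuleCat.{u} A) (f : M →ₗ[A] N), Function.Surjective f → M ∈ T → N ∈ T) ∧
  (∀ M : ModuleCat.{u} A, (∀ a ∈ I, ∀ x : M, a • x = 0) →
    ∀ S : Submodule A M, ModuleCat.of A S ∈ T → ModuleCat.of A (M ⧸ S) ∈ T → M ∈ T)

/-- The smallest torsion class of `mod (A/I)` containing a class `C`. -/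
def torsGenMod (A : Type u) [Ring A] (I : TwoSidedIdeal A) (C : Set (ModuleCat.{u} A)) :
    Set (ModuleCat.{u} A) :=
  ⋂₀ {T | IsTorsionClassMod A I T ∧ C ⊆ T}


section Helpers

variable {A : Type u} [Ring A]

/-- `I • M` as a submodule of `M`. -/
def smulSub (I : TwoSidedIdeal A) (M : Type u) [AddCommGroup M] [Module A M] :
    Submodule A M :=
  Submodule.span A {y : M | ∃ a ∈ I, ∃ x : M, a • x = y}

variable {I : TwoSidedIdeal A}

lemma smul_mem_smulSub {M : Type u} [AddCommGroup M] [Module A M] {a : A} (ha : a ∈ I)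
    (x : M) : a • x ∈ smulSub I M :=
  Submodule.subset_span ⟨a, ha, x, rfl⟩

lemma smulSub_le {M : Type u} [AddCommGroup M] [Module A M] {S : Submodule A M}
    (h : ∀ a ∈ I, ∀ x : M, a • x ∈ S) : smulSub I M ≤ S :=
  Submodule.span_le.2 (by rintro y ⟨a, ha, x, rfl⟩; exact h a ha x)

lemma ann_quot (M : Type u) [AddCommGroup M] [Module A M] :
    ∀ a ∈ I, ∀ x : M ⧸ smulSub I M, a • x = 0 := by
  intro a ha x
  obtain ⟨y, rfl⟩ := Submodule.Quotient.mk_surjective _ x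
  rw [← Submodule.Quotient.mk_smul, Submodule.Quotient.mk_eq_zero]
  exact smul_mem_smulSub ha y

lemma smulSub_eq_bot {M : Type u} [AddCommGroup M] [Module A M]
    (h : ∀ a ∈ I, ∀ x : M, a • x = 0) : smulSub I M = ⊥ :=
  le_bot_iff.1 (smulSub_le fun a ha x => by
    rw [h a ha x]; exact Submodule.zero_mem _)

lemma finite_of_subsingleton {M : Type u} [AddCommGroup M] [Module A M]
    (_ : Subsingleton M) : Module.Finite A M :=
  Module.finite_def.2 (by rw [Subsingleton.elim (⊤ : Submodule A M) ⊥]; exact Submodule.fg_bot)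

lemma finite_ext {M : Type u} [AddCommGroup M] [Module A M] (S : Submodule A M)
    (h1 : Module.Finite A S) (h2 : Module.Finite A (M ⧸ S)) : Module.Finite A M := by
  rw [Module.finite_def]
  apply Submodule.fg_of_fg_map_of_fg_inf_ker S.mkQ
  · rw [Submodule.map_top, Submodule.range_mkQ]
    exact Module.finite_def.1 h2
  · rw [Submodule.ker_mkQ, top_inf_eq]
    exact Module.Finite.iff_fg.1 h1

/-- The induced map on quotients by `I•(-)`. -/
def qMap {M N : Type u} [AddCommGroup M] [Module A M] [AddCommGroup N] [Module A N]
    (I : TwoSidedIdeal A) (f : M →ₗ[A] N) :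
    (M ⧸ smulSub I M) →ₗ[A] (N ⧸ smulSub I N) :=
  Submodule.mapQ _ _ f (smulSub_le fun a ha x => by
    rw [Submodule.mem_comap, map_smul]
    exact smul_mem_smulSub ha (f x))

lemma qMap_surjective {M N : Type u} [AddCommGroup M] [Module A M] [AddCommGroup N]
    [Module A N] (I : TwoSidedIdeal A) {f : M →ₗ[A] N} (hf : Function.Surjective f) :
    Function.Surjective (qMap I f) := by
  intro y
  obtain ⟨n, rfl⟩ := Submodule.Quotient.mk_surjective _ y
  obtain ⟨m, rfl⟩ := hf n
  exact ⟨Submodule.Quotient.mk m, Submodule.mapQ_apply _ _ _ _⟩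

lemma smulSub_quot {M : Type u} [AddCommGroup M] [Module A M] (P : Submodule A M) :
    smulSub I (M ⧸ P) = (smulSub I M).map P.mkQ := by
  apply le_antisymm
  · apply smulSub_le
    intro a ha z
    obtain ⟨x, rfl⟩ := Submodule.Quotient.mk_surjective _ z
    rw [← Submodule.Quotient.mk_smul]
    exact Submodule.mem_map_of_mem (smul_mem_smulSub ha x)
  · rw [Submodule.map_le_iff_le_comap]
    apply smulSub_le
    intro a ha x
    rw [Submodule.mem_comap, Submodule.mkQ_apply, Submodule.Quotient.mk_smul]
    exact smul_mem_smulSub ha _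

/-- annMod is closed under isomorphism. -/
lemma annMod_iso {M N : ModuleCat.{u} A} (h : M ∈ annMod A I) (e : M ≃ₗ[A] N) :
    N ∈ annMod A I := by
  have := h.1
  refine ⟨Module.Finite.equiv e, ?_⟩
  · intro a ha x
    have := h.2 a ha (e.symm x)
    calc a • x = e (a • e.symm x) := by rw [map_smul, e.apply_symm_apply]
    _ = 0 := by rw [this, map_zero]

lemma annMod_surj {M N : ModuleCat.{u} A} (h : M ∈ annMod A I) (f : M →ₗ[A] N)
    (hf : Function.Surjective f) : N ∈ annMod A I := by
  have := h.1
  refine ⟨Module.Finite.of_surjective f hf, ?_⟩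
  intro a ha y
  obtain ⟨x, rfl⟩ := hf y
  rw [← map_smul, h.2 a ha x, map_zero]

lemma annMod_subsingleton {M : ModuleCat.{u} A} (h : Subsingleton M) : M ∈ annMod A I :=
  ⟨finite_of_subsingleton h, fun _ _ _ => Subsingleton.elim _ _⟩

lemma annMod_quot (M : ModuleCat.{u} A) (h : Module.Finite A M) :
    ModuleCat.of A ((M : Type u) ⧸ smulSub I (M : Type u)) ∈ annMod A I :=
  ⟨Module.Finite.of_surjective (smulSub I (M : Type u)).mkQ
      (Submodule.Quotient.mk_surjective _), ann_quot _⟩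

/-- The lift of a class of `I`-annihilated modules to a class of all modules. -/
def liftCl (I : TwoSidedIdeal A) (R : Set (ModuleCat.{u} A)) : Set (ModuleCat.{u} A) :=
  {M | Module.Finite A M ∧ ModuleCat.of A ((M : Type u) ⧸ smulSub I (M : Type u)) ∈ R}

lemma mem_liftCl_iff {R : Set (ModuleCat.{u} A)}
    (hIso : ∀ M N : ModuleCat.{u} A, M ∈ R → Nonempty (M ≃ₗ[A] N) → N ∈ R)
    {M : ModuleCat.{u} A} (hM : M ∈ annMod A I) : M ∈ liftCl I R ↔ M ∈ R := by
  have e : ((M : Type u) ⧸ smulSub I (M : Type u)) ≃ₗ[A] M :=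
    Submodule.quotEquivOfEqBot _ (smulSub_eq_bot hM.2)
  constructor
  · intro h; exact hIso _ M h.2 ⟨e⟩
  · intro h; exact ⟨hM.1, hIso M _ h ⟨e.symm⟩⟩

lemma liftCl_isTorsionClass {R : Set (ModuleCat.{u} A)} (hR : IsTorsionClassMod A I R) :
    IsTorsionClass A (liftCl I R) := by
  obtain ⟨hAnn, hZero, hIso, hSurj, hExt⟩ := hR
  refine ⟨fun M hM => hM.1, ?_, ?_, ?_, ?_⟩
  · -- zero modules
    intro M hM
    refine ⟨finite_of_subsingleton hM, hZero _ ?_⟩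
    exact (Submodule.Quotient.mk_surjective _).subsingleton
  · -- isomorphism
    rintro M N hM ⟨e⟩
    have := hM.1
    refine ⟨Module.Finite.equiv e, ?_⟩
    exact hSurj _ _ (qMap I e.toLinearMap) (qMap_surjective I e.surjective) hM.2
  · -- surjections
    intro M N f hf hM
    have := hM.1
    exact ⟨Module.Finite.of_surjective f hf,
      hSurj _ _ (qMap I f) (qMap_surjective I hf) hM.2⟩
  · -- extensions
    intro M P hP hQ
    have hfin : Module.Finite A M := finite_ext P hP.1 hQ.1
    refine ⟨hfin, ?_⟩
    set Q := smulSub I (M : Type u) with hQdef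
    set K : Submodule A ((M : Type u) ⧸ Q) := P.map Q.mkQ with hKdef
    -- K is a quotient of P ⧸ I•P
    have hg : smulSub I (P : Type u) ≤ LinearMap.ker (Q.mkQ ∘ₗ P.subtype) := by
      apply smulSub_le
      intro a ha x
      rw [LinearMap.mem_ker, LinearMap.comp_apply]
      show Q.mkQ ((a • x : P) : (M : Type u)) = 0
      rw [SetLike.val_smul, Submodule.mkQ_apply, Submodule.Quotient.mk_eq_zero]
      exact smul_mem_smulSub ha _
    let g' := (smulSub I (P : Type u)).liftQ (Q.mkQ ∘ₗ P.subtype) hg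
    have hmemK : ∀ x, g' x ∈ K := by
      intro x
      obtain ⟨p, rfl⟩ := Submodule.Quotient.mk_surjective _ x
      exact ⟨p, p.2, rfl⟩
    let g : ((P : Type u) ⧸ smulSub I (P : Type u)) →ₗ[A] K :=
      LinearMap.codRestrict K g' hmemK
    have hgsurj : Function.Surjective g := by
      rintro ⟨k, hk⟩
      obtain ⟨p, hp, rfl⟩ := hk
      exact ⟨Submodule.Quotient.mk ⟨p, hp⟩, Subtype.ext rfl⟩
    have hK : ModuleCat.of A K ∈ R := hSurj _ (ModuleCat.of A K) g hgsurj hP.2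
    -- the quotient (M⧸Q)⧸K is isomorphic to (M⧸P)⧸I•(M⧸P)
    have e1 : (((M : Type u) ⧸ Q) ⧸ K) ≃ₗ[A] ((M : Type u) ⧸ Q ⊔ P) :=
      Submodule.quotientQuotientEquivQuotientSup Q P
    have e2 : (((M : Type u) ⧸ P) ⧸ smulSub I ((M : Type u) ⧸ P)) ≃ₗ[A]
        ((M : Type u) ⧸ P ⊔ Q) := by
      rw [smulSub_quot P]
      exact Submodule.quotientQuotientEquivQuotientSup P Q
    have e3 : ((M : Type u) ⧸ P ⊔ Q) ≃ₗ[A] ((M : Type u) ⧸ Q ⊔ P) :=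
      Submodule.quotEquivOfEq _ _ (sup_comm P Q)
    have hKq : ModuleCat.of A (((M : Type u) ⧸ Q) ⧸ K) ∈ R :=
      hIso _ _ hQ.2 ⟨(e2.trans e3).trans e1.symm⟩
    exact hExt (ModuleCat.of A ((M : Type u) ⧸ Q)) (ann_quot _) K hK hKq

/-- `annMod A I` itself is a torsion class of `mod (A/I)`. -/
lemma annMod_isTorsionClassMod : IsTorsionClassMod A I (annMod A I) := by
  refine ⟨fun M hM => hM, fun M hM => annMod_subsingleton hM, ?_, ?_, ?_⟩
  · rintro M N hM ⟨e⟩; exact annMod_iso hM e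
  · intro M N f hf hM; exact annMod_surj hM f hf
  · intro M hann S hS hQ
    exact ⟨finite_ext S hS.1 hQ.1, hann⟩

lemma allFinite_isTorsionClass :
    IsTorsionClass A {M : ModuleCat.{u} A | Module.Finite A M} := by
  refine ⟨fun M hM => hM, fun M hM => finite_of_subsingleton hM, ?_, ?_, ?_⟩
  · rintro M N hM ⟨e⟩
    have : Module.Finite A M := hM
    exact Module.Finite.equiv e
  · intro M N f hf hM
    have : Module.Finite A M := hM
    exact Module.Finite.of_surjective f hf
  · intro M S hS hQ; exact finite_ext S hS hQ

lemma torsGen_isTorsionClass {C : Set (ModuleCat.{u} A)}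
    (hC : ∀ M ∈ C, Module.Finite A M) : IsTorsionClass A (torsGen A C) := by
  have hmem : {M : ModuleCat.{u} A | Module.Finite A M} ∈
      {T | IsTorsionClass A T ∧ C ⊆ T} := ⟨allFinite_isTorsionClass, hC⟩
  refine ⟨?_, ?_, ?_, ?_, ?_⟩
  · intro M hM; exact hM _ hmem
  · intro M hM T hT; exact hT.1.2.1 M hM
  · intro M N hM he T hT; exact hT.1.2.2.1 M N (hM T hT) he
  · intro M N f hf hM T hT; exact hT.1.2.2.2.1 M N f hf (hM T hT)
  · intro M S hS hQ T hT; exact hT.1.2.2.2.2 M S (hS T hT) (hQ T hT)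

lemma torsGenMod_isTorsionClassMod {C : Set (ModuleCat.{u} A)}
    (hC : C ⊆ annMod A I) : IsTorsionClassMod A I (torsGenMod A I C) := by
  have hmem : annMod A I ∈ {T | IsTorsionClassMod A I T ∧ C ⊆ T} :=
    ⟨annMod_isTorsionClassMod, hC⟩
  refine ⟨?_, ?_, ?_, ?_, ?_⟩
  · intro M hM; exact hM _ hmem
  · intro M hM T hT; exact hT.1.2.1 M hM
  · intro M N hM he T hT; exact hT.1.2.2.1 M N (hM T hT) he
  · intro M N f hf hM T hT; exact hT.1.2.2.2.1 M N f hf (hM T hT)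
  · intro M hann S hS hQ T hT; exact hT.1.2.2.2.2 M hann S (hS T hT) (hQ T hT)

lemma subset_torsGen {C : Set (ModuleCat.{u} A)} : C ⊆ torsGen A C :=
  fun _ hM _ hT => hT.2 hM

lemma subset_torsGenMod {C : Set (ModuleCat.{u} A)} : C ⊆ torsGenMod A I C :=
  fun _ hM _ hT => hT.2 hM

lemma torsGen_le {C : Set (ModuleCat.{u} A)} {T : Set (ModuleCat.{u} A)}
    (hT : IsTorsionClass A T) (hCT : C ⊆ T) : torsGen A C ⊆ T :=
  fun _ hM => hM T ⟨hT, hCT⟩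

lemma torsGenMod_le {C T : Set (ModuleCat.{u} A)}
    (hT : IsTorsionClassMod A I T) (hCT : C ⊆ T) : torsGenMod A I C ⊆ T :=
  fun _ hM => hM T ⟨hT, hCT⟩

/-- Part (i) as a standalone lemma. -/
lemma inter_annMod_isTorsionClassMod {T : Set (ModuleCat.{u} A)}
    (hT : IsTorsionClass A T) : IsTorsionClassMod A I (T ∩ annMod A I) := by
  obtain ⟨hFin, hZero, hIso, hSurj, hExt⟩ := hT
  refine ⟨fun M hM => hM.2, ?_, ?_, ?_, ?_⟩
  · intro M hM; exact ⟨hZero M hM, annMod_subsingleton hM⟩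
  · rintro M N ⟨hM1, hM2⟩ ⟨e⟩
    exact ⟨hIso M N hM1 ⟨e⟩, annMod_iso hM2 e⟩
  · rintro M N f hf ⟨hM1, hM2⟩
    exact ⟨hSurj M N f hf hM1, annMod_surj hM2 f hf⟩
  · rintro M hann S ⟨hS1, hS2⟩ ⟨hQ1, hQ2⟩
    exact ⟨hExt M S hS1 hQ1, finite_ext S hS2.1 hQ2.1, hann⟩

end Helpers
/-- For a two-sided ideal `I` of `A`, the map `T ↦ T ∩ mod (A/I)`:
(i) sends torsion classes of `mod A` to torsion classes of `mod (A/I)`;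
(ii) is surjective onto torsion classes of `mod (A/I)`;
(iii) preserves arbitrary meets (the meet of a family `𝒮` in the lattice of torsion
classes being the class of finitely generated modules lying in every member of `𝒮`);
(iv) preserves arbitrary joins. -/
theorem tors_map_to_quotient_complete_lattice_hom (k A : Type u) [Field k] [Ring A]
    [Algebra k A] [FiniteDimensional k A] (I : TwoSidedIdeal A) :
    (∀ T : Set (ModuleCat.{u} A), IsTorsionClass A T →
      IsTorsionClassMod A I (T ∩ annMod A I)) ∧
    (∀ S : Set (ModuleCat.{u} A), IsTorsionClassMod A I S →
      ∃ T : Set (ModuleCat.{u} A), IsTorsionClass A T ∧ T ∩ annMod A I = S) ∧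
    (∀ 𝒮 : Set (Set (ModuleCat.{u} A)), (∀ T ∈ 𝒮, IsTorsionClass A T) →
      {X : ModuleCat.{u} A | Module.Finite A X ∧ ∀ T ∈ 𝒮, X ∈ T} ∩ annMod A I =
      {X : ModuleCat.{u} A | X ∈ annMod A I ∧ ∀ T ∈ 𝒮, X ∈ T ∩ annMod A I}) ∧
    (∀ 𝒮 : Set (Set (ModuleCat.{u} A)), (∀ T ∈ 𝒮, IsTorsionClass A T) →
      torsGen A (⋃₀ 𝒮) ∩ annMod A I =
      torsGenMod A I (⋃ T ∈ 𝒮, (T ∩ annMod A I))) := by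
  refine ⟨fun T hT => inter_annMod_isTorsionClassMod hT, ?_, ?_, ?_⟩
  · -- (ii) surjectivity
    intro S hS
    refine ⟨liftCl I S, liftCl_isTorsionClass hS, ?_⟩
    ext X
    constructor
    · rintro ⟨hX1, hX2⟩
      exact (mem_liftCl_iff hS.2.2.1 hX2).1 hX1
    · intro hX
      have hXa : X ∈ annMod A I := hS.1 X hX
      exact ⟨(mem_liftCl_iff hS.2.2.1 hXa).2 hX, hXa⟩
  · -- (iii) meets
    intro 𝒮 _
    ext X
    constructor
    · rintro ⟨⟨_, hX2⟩, hX3⟩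
      exact ⟨hX3, fun T hT => ⟨hX2 T hT, hX3⟩⟩
    · rintro ⟨hX1, hX2⟩
      exact ⟨⟨hX1.1, fun T hT => (hX2 T hT).1⟩, hX1⟩
  · -- (iv) joins
    intro 𝒮 h𝒮
    set C : Set (ModuleCat.{u} A) := ⋃ T ∈ 𝒮, (T ∩ annMod A I) with hCdef
    have hCann : C ⊆ annMod A I := by
      rintro X hX
      simp only [hCdef, Set.mem_iUnion] at hX
      obtain ⟨T, _, _, hXa⟩ := hX
      exact hXa
    have hRtors : IsTorsionClassMod A I (torsGenMod A I C) :=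
      torsGenMod_isTorsionClassMod hCann
    have hGfin : ∀ M ∈ ⋃₀ 𝒮, Module.Finite A M := by
      rintro M ⟨T, hT, hM⟩
      exact (h𝒮 T hT).1 M hM
    have hGtors : IsTorsionClass A (torsGen A (⋃₀ 𝒮)) := torsGen_isTorsionClass hGfin
    apply le_antisymm
    · -- ⊆ : use the lift of torsGenMod C
      have hlift : IsTorsionClass A (liftCl I (torsGenMod A I C)) :=
        liftCl_isTorsionClass hRtors
      have hsub : ⋃₀ 𝒮 ⊆ liftCl I (torsGenMod A I C) := by
        rintro M ⟨T, hT, hM⟩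
        have hfin : Module.Finite A M := (h𝒮 T hT).1 M hM
        refine ⟨hfin, subset_torsGenMod ?_⟩
        simp only [hCdef, Set.mem_iUnion]
        refine ⟨T, hT, ?_, annMod_quot M hfin⟩
        exact (h𝒮 T hT).2.2.2.1 M _ (smulSub I (M : Type u)).mkQ
          (Submodule.Quotient.mk_surjective _) hM
      rintro X ⟨hX1, hX2⟩
      have : X ∈ liftCl I (torsGenMod A I C) := torsGen_le hlift hsub hX1
      exact (mem_liftCl_iff hRtors.2.2.1 hX2).1 this
    · -- ⊇ : torsGen ∩ annMod is a torsion class mod (A/I) containing C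
      apply torsGenMod_le (inter_annMod_isTorsionClassMod hGtors)
      rintro X hX
      simp only [hCdef, Set.mem_iUnion] at hX
      obtain ⟨T, hT, hXT, hXa⟩ := hX
      exact ⟨subset_torsGen (Set.mem_sUnion.2 ⟨T, hT, hXT⟩), hXa⟩
end
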